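/- Let D be a dense countably infinite mesh in I^n and fix an integer k with 1 ≤ k ≤ n. Let A, C : D → I be functions with A ≤ C, L_k^{(A,C)}(DU) ≥ 0 for all DU ∈ R_k(D), and δ_{k,D}^{(A,C)}(d) = 0 for all d ∈ D. Assume A(v) = C(v) for all vertices v of the unit cube I^n, and that there exists a k-box Q with vertices in D such that V_{C,k}(Q) = v < 0, with vertices x_1,…,x_s (s ∈ {1,…,2^{k−1}}) satisfying m_Q(x_i) = −1 and A(x_i) < C(x_i) for all i ∈ {1,…,s}, while A(x) = C(x) for every other vertex x of Q with m_Q(x) = −1. Assume further that for each i ∈ {1,…,s} we are given DU_i ∈ R_k(D) with m_{DU_i}(x_i) > 0 and L_k^{(A,C)}(DU_i) < |m_{DU_i}(x_i)|·|v|/s. Set m = ∏_{l=1}^s |m_{DU_l}(x_l)| and m_i = m/|m_{DU_i}(x_i)|, and define the multisets Ř (m copies of Q together with m_l copies of every box of DU_l for each l ∈ {1,…,s}) and, for each i ∈ {1,…,s}, Ř_i (m copies of Q together with m_l copies of every box of DU_l for each l ∈ {1,…,s}\{i}). Then: (i) for each i ∈ {1,…,s}, L_k^{(A,C)}(Ř_i)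 ≤ m·(C(x_i) − A(x_i)) + m·V_{C,k}(Q) + Σ_{l∈{1,…,s}\{i}} m_l·L_k^{(A,C)}(DU_l); (ii) L_k^{(A,C)}(Ř) ≤ m·V_{C,k}(Q) + Σ_{l=1}^s m_l·L_k^{(A,C)}(DU_l). -/

import Mathlib

open scoped Classical BigOperators

namespace KIncr

/-- Points of the ambient space `ℝ^n`. -/
abbrev Pt (n : ℕ) := Fin n → ℝ

/-- Membership in the unit cube `I^n = [0,1]^n`. -/
def inCube {n : ℕ} (x : Pt n) : Prop := ∀ i, x i ∈ Set.Icc (0:ℝ) 1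

/-- The unit cube as a set. -/
def cubeSet (n : ℕ) : Set (Pt n) := {x | inCube x}

/-- Vertices of the unit cube `I^n`. -/
def isCubeVertex {n : ℕ} (x : Pt n) : Prop := ∀ i, x i = 0 ∨ x i = 1

/-- A (formal) box, given by its lower-left and upper-right corners. -/
structure Box (n : ℕ) where
  lo : Pt n
  hi : Pt n

/-- `R` is a `k`-box in `I^n`: exactly `k` coordinates are nondegenerate. -/
def Box.IsKBox {n : ℕ} (k : ℕ) (R : Box n) : Prop :=
  inCube R.lo ∧ inCube R.hi ∧ (∀ i, R.lo i ≤ R.hi i) ∧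
    (Finset.univ.filter (fun i => R.lo i < R.hi i)).card = k

/-- `v` is a vertex of the box `R`. -/
def Box.IsVertex {n : ℕ} (R : Box n) (v : Pt n) : Prop :=
  ∀ i, v i = R.lo i ∨ v i = R.hi i

/-- The (finite) set of vertices of a box. -/
noncomputable def Box.vertices {n : ℕ} (R : Box n) : Finset (Pt n) :=
  Finset.image (fun ε : Fin n → Bool => fun i => if ε i then R.hi i else R.lo i)
    Finset.univ

/-- The sign `(-1)^(m-(n-k))` of a vertex `v` of a `k`-box, where
`m = #{i : v i = lo i}`;  since `m ≥ n - k`, this equals `(-1)^(m+(n-k))`. -/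
noncomputable def Box.sign {n : ℕ} (k : ℕ) (R : Box n) (v : Pt n) : ℤ :=
  (-1) ^ ((Finset.univ.filter (fun i => v i = R.lo i)).card + (n - k))

/-- The multiplicity `m_R(u)` of a point `u` with respect to a `k`-box `R`. -/
noncomputable def Box.mult {n : ℕ} (k : ℕ) (R : Box n) (u : Pt n) : ℤ :=
  if R.IsVertex u then R.sign k u else 0

/-- `V_{A,k}(R) = ∑_{v ∈ ver R} sign_R(v) · A(v)`. -/
noncomputable def Vvol {n : ℕ} (k : ℕ) (A : Pt n → ℝ) (R : Box n) : ℝ :=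
  ∑ v ∈ R.vertices, (R.sign k v : ℝ) * A v

/-- A function is `k`-increasing on `D` if `V_{A,k}(R) ≥ 0` for every `k`-box
with all vertices in `D`. -/
def KIncreasingOn {n : ℕ} (k : ℕ) (D : Set (Pt n)) (A : Pt n → ℝ) : Prop :=
  ∀ R : Box n, R.IsKBox k → (∀ v ∈ R.vertices, v ∈ D) → 0 ≤ Vvol k A R

/-- The multiplicity `m_DU(u)` of a point with respect to a formal (multiset)
disjoint union of `k`-boxes. -/
noncomputable def multDU {n : ℕ} (k : ℕ) (DU : Multiset (Box n)) (u : Pt n) : ℤ :=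
  (DU.map (fun R => R.mult k u)).sum

/-- `DU ∈ R_k(D)`: every box of the multiset `DU` is a `k`-box with all its
vertices in `D`. -/
def memRk {n : ℕ} (k : ℕ) (D : Set (Pt n)) (DU : Multiset (Box n)) : Prop :=
  ∀ R ∈ DU, R.IsKBox k ∧ ∀ v ∈ R.vertices, v ∈ D

/-- `L_k^{(A,B)}(DU) = ∑_{m_DU(u)>0} m_DU(u)·B(u) + ∑_{m_DU(u)<0} m_DU(u)·A(u)`. -/
noncomputable def Lk {n : ℕ} (k : ℕ) (A B : Pt n → ℝ) (DU : Multiset (Box n)) : ℝ :=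
  ∑ u ∈ DU.toFinset.biUnion Box.vertices,
    (if 0 < multDU k DU u then (multDU k DU u : ℝ) * B u
     else if multDU k DU u < 0 then (multDU k DU u : ℝ) * A u else 0)

/-- `P⁻_{k,D}^{(A,B)}(x)`, with the Mathlib convention `sInf ∅ = 0`. -/
noncomputable def Pneg {n : ℕ} (k : ℕ) (D : Set (Pt n)) (A B : Pt n → ℝ) (x : Pt n) : ℝ :=
  sInf {r : ℝ | ∃ DU : Multiset (Box n), memRk k D DU ∧ multDU k DU x < 0 ∧
    r = Lk k A B DU / |(multDU k DU x : ℝ)|}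

/-- `P⁺_{k,D}^{(A,B)}(x)`, with the Mathlib convention `sInf ∅ = 0`. -/
noncomputable def Ppos {n : ℕ} (k : ℕ) (D : Set (Pt n)) (A B : Pt n → ℝ) (x : Pt n) : ℝ :=
  sInf {r : ℝ | ∃ DU : Multiset (Box n), memRk k D DU ∧ 0 < multDU k DU x ∧
    r = Lk k A B DU / |(multDU k DU x : ℝ)|}

/-- `γ_{k,D}^{(A,B)}(x) = min {P⁻_{k,D}^{(A,B)}(x), B(x) - A(x)}`. -/
noncomputable def gammaK {n : ℕ} (k : ℕ) (D : Set (Pt n)) (A B : Pt n → ℝ) (x : Pt n) : ℝ :=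
  min (Pneg k D A B x) (B x - A x)

/-- `δ_{k,D}^{(A,B)}(x) = min {P⁺_{k,D}^{(A,B)}(x), B(x) - A(x)}`. -/
noncomputable def deltaK {n : ℕ} (k : ℕ) (D : Set (Pt n)) (A B : Pt n → ℝ) (x : Pt n) : ℝ :=
  min (Ppos k D A B x) (B x - A x)

/-- A dense countably infinite mesh `D = ∏ δᵢ` in `I^n`. -/
def IsMesh {n : ℕ} (D : Set (Pt n)) : Prop :=
  ∃ δ : Fin n → Set ℝ,
    (∀ i, δ i ⊆ Set.Icc (0:ℝ) 1 ∧ (δ i).Countable ∧ (δ i).Infinite ∧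
      Set.Icc (0:ℝ) 1 ⊆ closure (δ i) ∧ (0:ℝ) ∈ δ i ∧ (1:ℝ) ∈ δ i) ∧
    D = {x : Pt n | ∀ i, x i ∈ δ i}

/-- `A` is grounded: it vanishes whenever some coordinate is `0`. -/
def Grounded {n : ℕ} (A : Pt n → ℝ) : Prop :=
  ∀ x : Pt n, inCube x → (∃ i, x i = 0) → A x = 0

/-- `A` is 1-increasing (increasing in each variable). -/
def OneIncreasing {n : ℕ} (A : Pt n → ℝ) : Prop :=
  ∀ x y : Pt n, inCube x → inCube y → (∀ i, x i ≤ y i) → A x ≤ A y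

/-- `A` has uniform marginals. -/
def UniformMarginals {n : ℕ} (A : Pt n → ℝ) : Prop :=
  ∀ i : Fin n, ∀ t ∈ Set.Icc (0:ℝ) 1, A (Function.update (fun _ => (1:ℝ)) i t) = t

/-- `A` is a standardized function. -/
def Standardized {n : ℕ} (A : Pt n → ℝ) : Prop :=
  Grounded A ∧ OneIncreasing A ∧ A (fun _ => (1:ℝ)) = 1

/-- `A` is a semicopula. -/
def Semicopula {n : ℕ} (A : Pt n → ℝ) : Prop :=
  Grounded A ∧ OneIncreasing A ∧ UniformMarginals A

/-- `A` maps the unit cube into `I = [0,1]`. -/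
def MapsToI {n : ℕ} (A : Pt n → ℝ) : Prop :=
  ∀ x : Pt n, inCube x → A x ∈ Set.Icc (0:ℝ) 1

/-- Condition S: all discontinuities of all sections of `A` lie in the
countable set `S`. -/
def CondS {n : ℕ} (A : Pt n → ℝ) (S : Set ℝ) : Prop :=
  ∀ u : Pt n, inCube u → ∀ i : Fin n, ∀ t ∈ Set.Icc (0:ℝ) 1, t ∉ S →
    ContinuousWithinAt (fun s => A (Function.update u i s)) (Set.Icc (0:ℝ) 1) t

/-- A quasi-copula: a semicopula that is 1-Lipschitz w.r.t. the ℓ¹-norm. -/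
def QuasiCopula {n : ℕ} (A : Pt n → ℝ) : Prop :=
  Semicopula A ∧ ∀ x y : Pt n, inCube x → inCube y → |A x - A y| ≤ ∑ i, |x i - y i|

end KIncr

/-!
`L_k^{(A,C)}` of a multiset of boxes with multiplicity function `m` is
`∑ᵤ (m(u)·C(u) + m(u)⁻·(C(u) − A(u)))`, and when `A ≤ C` this summand is subadditive and
positively homogeneous in `m`. So `L_k` of `M·Q + ∑ₗ mₗ·DUₗ` is at most
`M·V_{C,k}(Q) + ∑ₗ mₗ·L_k(DUₗ)` plus a penalty `M·(C(u) − A(u))` at each vertex `u` of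
multiplicity `-1` in `Q`. The penalty is zero where `A = C`, and it disappears at `xₗ` once
`DUₗ` is included: there the `mₗ` copies of `DUₗ` have multiplicity exactly `M` and cancel
the `M` copies of `Q`.
-/

namespace KIncr

variable {n : ℕ}

section LkTerm

variable (A B : Pt n → ℝ)

noncomputable def lkTerm (m : ℤ) (u : Pt n) : ℝ :=
  if 0 < m then (m : ℝ) * B u else if m < 0 then (m : ℝ) * A u else 0

lemma lkTerm_eq (m : ℤ) (u : Pt n) :
    lkTerm A B m u = m * B u + ((max (-m) 0 : ℤ) : ℝ) * (B u - A u) := by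
  rcases lt_trichotomy m 0 with h | rfl | h
  · rw [lkTerm, if_neg h.not_gt, if_pos h, max_eq_left (by omega)]
    push_cast
    ring
  · simp [lkTerm]
  · rw [lkTerm, if_pos h, max_eq_right (by omega)]
    push_cast
    ring

variable {A B}

lemma lkTerm_of_nonneg {m : ℤ} (hm : 0 ≤ m) (u : Pt n) : lkTerm A B m u = m * B u := by
  rw [lkTerm_eq, max_eq_right (by omega)]
  push_cast
  ring

lemma lkTerm_of_nonpos {m : ℤ} (hm : m ≤ 0) (u : Pt n) : lkTerm A B m u = m * A u := by
  rw [lkTerm_eq, max_eq_left (by omega)]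
  push_cast
  ring

lemma lkTerm_of_eq {u : Pt n} (h : A u = B u) (m : ℤ) : lkTerm A B m u = m * B u := by
  rw [lkTerm_eq, h]
  ring

lemma lkTerm_add_le {u : Pt n} (h : A u ≤ B u) (a b : ℤ) :
    lkTerm A B (a + b) u ≤ lkTerm A B a u + lkTerm A B b u := by
  have hmax : ((max (-(a + b)) 0 : ℤ) : ℝ) ≤ ((max (-a) 0 + max (-b) 0 : ℤ) : ℝ) := by
    exact_mod_cast (by omega : max (-(a + b)) 0 ≤ max (-a) 0 + max (-b) 0)
  have hpenalty := mul_le_mul_of_nonneg_right hmax (sub_nonneg.mpr h)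
  rw [lkTerm_eq, lkTerm_eq, lkTerm_eq]
  push_cast at hpenalty ⊢
  linarith

lemma lkTerm_natCast_mul (c : ℕ) (m : ℤ) (u : Pt n) :
    lkTerm A B (c * m) u = c * lkTerm A B m u := by
  have hmax : max (-(c * m)) 0 = c * max (-m) 0 := by
    rcases le_total m 0 with hm | hm
    · rw [max_eq_left (by nlinarith), max_eq_left (by omega)]
      ring
    · rw [max_eq_right (by nlinarith), max_eq_right (by omega), mul_zero]
  rw [lkTerm_eq, lkTerm_eq, hmax]
  push_cast
  ring

lemma lkTerm_sum_natCast_mul_le {u : Pt n} (h : A u ≤ B u) {ι : Type*} (E : Finset ι)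
    (c : ι → ℕ) (m : ι → ℤ) :
    lkTerm A B (∑ l ∈ E, c l * m l) u ≤ ∑ l ∈ E, c l * lkTerm A B (m l) u := by
  classical
  induction E using Finset.cons_induction with
  | empty => simp [lkTerm]
  | cons a E ha ih =>
    rw [Finset.sum_cons, Finset.sum_cons, ← lkTerm_natCast_mul]
    exact (lkTerm_add_le h _ _).trans (by linarith)

end LkTerm

lemma Box.mem_vertices {R : Box n} {u : Pt n} : u ∈ R.vertices ↔ R.IsVertex u := by
  constructor
  · intro hu
    obtain ⟨ε, -, rfl⟩ := Finset.mem_image.mp hu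
    intro i
    by_cases h : ε i <;> simp [h]
  · intro h
    refine Finset.mem_image.mpr ⟨fun i => decide (u i = R.hi i), Finset.mem_univ _, ?_⟩
    funext i
    by_cases h' : u i = R.hi i
    · simp [h']
    · simpa [h'] using ((h i).resolve_right h').symm

lemma Box.mult_eq_zero_of_notMem {R : Box n} {k : ℕ} {u : Pt n} (hu : u ∉ R.vertices) :
    R.mult k u = 0 :=
  if_neg (mt Box.mem_vertices.mpr hu)

lemma Box.mem_vertices_of_mult_ne_zero {R : Box n} {k : ℕ} {u : Pt n}
    (hu : R.mult k u ≠ 0) : u ∈ R.vertices :=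
  not_not.mp (mt Box.mult_eq_zero_of_notMem hu)

lemma Box.mult_nonneg_or_eq_neg_one (R : Box n) (k : ℕ) (u : Pt n) :
    0 ≤ R.mult k u ∨ R.mult k u = -1 := by
  unfold Box.mult Box.sign
  split
  · rcases neg_one_pow_eq_or ℤ ((Finset.univ.filter fun i => u i = R.lo i).card + (n - k))
      with h | h <;> simp [h]
  · simp

lemma Box.sum_mult_mul_eq_Vvol (k : ℕ) (C : Pt n → ℝ) (R : Box n) {S : Finset (Pt n)}
    (hS : R.vertices ⊆ S) : ∑ u ∈ S, (R.mult k u : ℝ) * C u = Vvol k C R := by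
  rw [← Finset.sum_subset hS fun u _ hu => by simp [Box.mult_eq_zero_of_notMem hu], Vvol]
  exact Finset.sum_congr rfl fun u hu => by rw [Box.mult, if_pos (Box.mem_vertices.mp hu)]

section MultDU

variable (k : ℕ) (u : Pt n)

lemma multDU_add (X Y : Multiset (Box n)) :
    multDU k (X + Y) u = multDU k X u + multDU k Y u := by
  simp [multDU]

lemma multDU_nsmul (c : ℕ) (X : Multiset (Box n)) :
    multDU k (c • X) u = c * multDU k X u := by
  simp [multDU, Multiset.map_nsmul, Multiset.sum_nsmul]

lemma multDU_replicate (c : ℕ) (R : Box n) :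
    multDU k (Multiset.replicate c R) u = c * R.mult k u := by
  simp [multDU, Multiset.map_replicate, Multiset.sum_replicate]

lemma multDU_sum {ι : Type*} (E : Finset ι) (X : ι → Multiset (Box n)) :
    multDU k (∑ l ∈ E, X l) u = ∑ l ∈ E, multDU k (X l) u := by
  classical
  induction E using Finset.cons_induction with
  | empty => simp [multDU]
  | cons a E ha ih => rw [Finset.sum_cons, Finset.sum_cons, multDU_add, ih]

end MultDU

lemma Lk_eq_sum_lkTerm (k : ℕ) (A B : Pt n → ℝ) (X : Multiset (Box n)) {S : Finset (Pt n)}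
    (hS : ∀ R ∈ X, R.vertices ⊆ S) :
    Lk k A B X = ∑ u ∈ S, lkTerm A B (multDU k X u) u := by
  have hsub : X.toFinset.biUnion Box.vertices ⊆ S := fun u hu => by
    obtain ⟨R, hR, hu⟩ := Finset.mem_biUnion.mp hu
    exact hS R (Multiset.mem_toFinset.mp hR) hu
  refine Finset.sum_subset hsub fun u _ hu => ?_
  have h0 : multDU k X u = 0 := Multiset.sum_eq_zero fun z hz => by
    obtain ⟨R, hR, rfl⟩ := Multiset.mem_map.mp hz
    exact Box.mult_eq_zero_of_notMem fun hv =>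
      hu (Finset.mem_biUnion.mpr ⟨R, Multiset.mem_toFinset.mpr hR, hv⟩)
  simp [h0]

lemma exists_finset_vertices_subset {k : ℕ} {D : Set (Pt n)} {Q : Box n} {ι : Type*}
    [Fintype ι] {DU : ι → Multiset (Box n)} (hQD : ∀ w ∈ Q.vertices, w ∈ D)
    (hDU : ∀ l, memRk k D (DU l)) :
    ∃ S : Finset (Pt n), Q.vertices ⊆ S ∧ (∀ l, ∀ R ∈ DU l, R.vertices ⊆ S) ∧ ↑S ⊆ D := by
  classical
  refine ⟨(Q ::ₘ ∑ l, DU l).toFinset.biUnion Box.vertices, ?_, ?_, ?_⟩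
  · exact fun u hu => Finset.mem_biUnion.mpr
      ⟨Q, Multiset.mem_toFinset.mpr (Multiset.mem_cons_self _ _), hu⟩
  · exact fun l R hR u hu => Finset.mem_biUnion.mpr ⟨R, Multiset.mem_toFinset.mpr
      (Multiset.mem_cons_of_mem (Multiset.mem_sum.mpr ⟨l, Finset.mem_univ l, hR⟩)), hu⟩
  · intro u hu
    obtain ⟨R, hR, huR⟩ := Finset.mem_biUnion.mp hu
    rcases Multiset.mem_cons.mp (Multiset.mem_toFinset.mp hR) with rfl | hR
    · exact hQD u huR
    · obtain ⟨l, -, hR⟩ := Multiset.mem_sum.mp hR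
      exact (hDU l R hR).2 u huR

section Combination

variable {k : ℕ} {A C : Pt n → ℝ} {Q : Box n} {s : ℕ} {x : Fin s → Pt n}
  {DU : Fin s → Multiset (Box n)} {M : ℕ} {c : Fin s → ℕ}

lemma lkTerm_combination_le (hxinj : Function.Injective x) (hxQ : ∀ j, Q.mult k (x j) = -1)
    (hother : ∀ u ∈ Q.vertices, Q.mult k u = -1 → (∀ i, x i ≠ u) → A u = C u)
    (hc : ∀ j, (c j : ℤ) * multDU k (DU j) (x j) = M) (E : Finset (Fin s)) {u : Pt n}
    (hu : A u ≤ C u) :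
    lkTerm A C (M * Q.mult k u + ∑ l ∈ E, c l * multDU k (DU l) u) u ≤
      M * (Q.mult k u * C u) + (∑ j ∈ Eᶜ, if x j = u then M * (C u - A u) else 0) +
        ∑ l ∈ E, c l * lkTerm A C (multDU k (DU l) u) u := by
  have hsub := lkTerm_add_le hu (M * Q.mult k u) (∑ l ∈ E, c l * multDU k (DU l) u)
  have hsum := lkTerm_sum_natCast_mul_le hu E c (fun l => multDU k (DU l) u)
  by_cases hx : ∃ j, x j = u
  · obtain ⟨j, rfl⟩ := hx
    by_cases hj : j ∈ E
    · have hcancel : (M * Q.mult k (x j) + ∑ l ∈ E, c l * multDU k (DU l) (x j) : ℤ) =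
          ∑ l ∈ E.erase j, c l * multDU k (DU l) (x j) := by
        rw [hxQ, ← Finset.add_sum_erase E _ hj, hc j]
        ring
      have hextra : (∑ i ∈ Eᶜ, if x i = x j then M * (C (x j) - A (x j)) else 0) = 0 :=
        Finset.sum_eq_zero fun i hi =>
          if_neg fun h => Finset.mem_compl.mp hi (by rwa [hxinj h])
      have hsplit : ∑ l ∈ E, c l * lkTerm A C (multDU k (DU l) (x j)) (x j) =
          M * C (x j) + ∑ l ∈ E.erase j, c l * lkTerm A C (multDU k (DU l) (x j)) (x j) := by
        rw [← Finset.add_sum_erase E _ hj, ← lkTerm_natCast_mul, hc j,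
          lkTerm_of_nonneg (Int.natCast_nonneg M)]
        push_cast
        rfl
      rw [hcancel, hextra, hsplit, hxQ]
      have := lkTerm_sum_natCast_mul_le hu (E.erase j) c (fun l => multDU k (DU l) (x j))
      push_cast
      linarith
    · have hextra : (∑ i ∈ Eᶜ, if x i = x j then M * (C (x j) - A (x j)) else 0) =
          M * (C (x j) - A (x j)) := by
        rw [Finset.sum_eq_single_of_mem j (Finset.mem_compl.mpr hj), if_pos rfl]
        exact fun i _ hij => if_neg fun h => hij (hxinj h)
      rw [hxQ, lkTerm_of_nonpos (m := M * -1) (by omega)] at hsub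
      rw [hextra, hxQ]
      push_cast at hsub ⊢
      linarith
  · push Not at hx
    have hextra : (∑ i ∈ Eᶜ, if x i = u then M * (C u - A u) else 0) = 0 :=
      Finset.sum_eq_zero fun i _ => if_neg (hx i)
    have hQu : lkTerm A C (M * Q.mult k u) u = M * (Q.mult k u * C u) := by
      rcases Q.mult_nonneg_or_eq_neg_one k u with h | h
      · rw [lkTerm_of_nonneg (by positivity)]
        push_cast
        ring
      · have hv := Box.mem_vertices_of_mult_ne_zero (by omega : Q.mult k u ≠ 0)
        rw [lkTerm_of_eq (hother u hv h hx)]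
        push_cast
        ring
    rw [hextra, ← hQu]
    linarith

theorem Lk_replicate_add_sum_nsmul_le {D : Set (Pt n)} (hAC : ∀ u ∈ D, A u ≤ C u)
    (hQD : ∀ w ∈ Q.vertices, w ∈ D) (hDU : ∀ l, memRk k D (DU l))
    (hxinj : Function.Injective x) (hxQ : ∀ j, Q.mult k (x j) = -1)
    (hother : ∀ u ∈ Q.vertices, Q.mult k u = -1 → (∀ i, x i ≠ u) → A u = C u)
    (hc : ∀ j, (c j : ℤ) * multDU k (DU j) (x j) = M) (E : Finset (Fin s)) :
    Lk k A C (Multiset.replicate M Q + ∑ l ∈ E, c l • DU l) ≤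
      ∑ j ∈ Eᶜ, M * (C (x j) - A (x j)) + M * Vvol k C Q +
        ∑ l ∈ E, c l * Lk k A C (DU l) := by
  obtain ⟨S, hQS, hDUS, hSD⟩ := exists_finset_vertices_subset hQD hDU
  have hACS : ∀ u ∈ S, A u ≤ C u := fun u hu => hAC u (hSD hu)
  have hXS : ∀ R ∈ Multiset.replicate M Q + ∑ l ∈ E, c l • DU l, R.vertices ⊆ S := by
    intro R hR
    rcases Multiset.mem_add.mp hR with hR | hR
    · rw [Multiset.eq_of_mem_replicate hR]
      exact hQS
    · obtain ⟨l, -, hR⟩ := Multiset.mem_sum.mp hR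
      exact hDUS l R (Multiset.mem_nsmul.mp hR).2
  have hxS : ∀ j, x j ∈ S := fun j =>
    hQS (Box.mem_vertices_of_mult_ne_zero (k := k) (by simp [hxQ j]))
  calc Lk k A C (Multiset.replicate M Q + ∑ l ∈ E, c l • DU l)
      = ∑ u ∈ S, lkTerm A C (M * Q.mult k u + ∑ l ∈ E, c l * multDU k (DU l) u) u := by
        rw [Lk_eq_sum_lkTerm k A C _ hXS]
        simp only [multDU_add, multDU_replicate, multDU_sum, multDU_nsmul]
    _ ≤ ∑ u ∈ S, (M * (Q.mult k u * C u) +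
          (∑ j ∈ Eᶜ, if x j = u then M * (C u - A u) else 0) +
          ∑ l ∈ E, c l * lkTerm A C (multDU k (DU l) u) u) :=
        Finset.sum_le_sum fun u hu =>
          lkTerm_combination_le hxinj hxQ hother hc E (hACS u hu)
    _ = ∑ j ∈ Eᶜ, M * (C (x j) - A (x j)) + M * Vvol k C Q +
          ∑ l ∈ E, c l * Lk k A C (DU l) := by
        rw [Finset.sum_add_distrib, Finset.sum_add_distrib, Finset.sum_comm,
          Finset.sum_comm (s := S) (t := E)]
        simp only [Finset.sum_ite_eq, hxS, if_true, ← Finset.mul_sum,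
          Lk_eq_sum_lkTerm k A C _ (hDUS _), Box.sum_mult_mul_eq_Vvol k C Q hQS]
        ring

end Combination

end KIncr

open KIncr

theorem stmt13_general (n k : ℕ) (D : Set (Pt n)) (A C : Pt n → ℝ) (hAC : ∀ u ∈ D, A u ≤ C u)
    (Q : Box n) (hQD : ∀ w ∈ Q.vertices, w ∈ D) (v : ℝ) (s : ℕ)
    (x : Fin s → Pt n) (hxinj : Function.Injective x)
    (hxv : ∀ i, x i ∈ Q.vertices ∧ Q.mult k (x i) = -1 ∧ A (x i) < C (x i))
    (hother : ∀ u ∈ Q.vertices, Q.mult k u = -1 → (∀ i, x i ≠ u) → A u = C u)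
    (DU : Fin s → Multiset (Box n))
    (hDU : ∀ i, memRk k D (DU i) ∧ 0 < multDU k (DU i) (x i) ∧
      Lk k A C (DU i) < |(multDU k (DU i) (x i) : ℝ)| * |v| / (s : ℝ))
    (M : ℕ) (hM : M = ∏ l, (multDU k (DU l) (x l)).natAbs)
    (mi : Fin s → ℕ)
    (hmi : ∀ i, mi i = ∏ l ∈ Finset.univ.erase i, (multDU k (DU l) (x l)).natAbs)
    (Rchk : Multiset (Box n))
    (hRchk : Rchk = Multiset.replicate M Q + ∑ l, mi l • DU l)
    (Rchki : Fin s → Multiset (Box n))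
    (hRchki : ∀ i, Rchki i =
      Multiset.replicate M Q + ∑ l ∈ Finset.univ.erase i, mi l • DU l) :
    (∀ i, Lk k A C (Rchki i) ≤
        (M : ℝ) * (C (x i) - A (x i)) + (M : ℝ) * Vvol k C Q +
        ∑ l ∈ Finset.univ.erase i, (mi l : ℝ) * Lk k A C (DU l)) ∧
    Lk k A C Rchk ≤ (M : ℝ) * Vvol k C Q + ∑ l, (mi l : ℝ) * Lk k A C (DU l) := by
  have hc : ∀ j, (mi j : ℤ) * multDU k (DU j) (x j) = M := fun j => by
    rw [hmi, hM, ← Finset.prod_erase_mul _ _ (Finset.mem_univ j), Nat.cast_mul,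
      Int.natCast_natAbs, abs_of_pos (hDU j).2.1]
  have hbound := Lk_replicate_add_sum_nsmul_le hAC hQD (fun l => (hDU l).1) hxinj
    (fun j => (hxv j).2.1) hother hc
  refine ⟨fun i => ?_, ?_⟩
  · simpa [← hRchki, Finset.compl_erase] using hbound (Finset.univ.erase i)
  · simpa [← hRchk] using hbound Finset.univ

/-- Proposition 5.4: upper bounds for `L_k^{(A,C)}` of the
combined disjoint unions `Ř` and `Řᵢ`. -/
theorem stmt13 (n k : ℕ) (hn : 1 ≤ n) (hk1 : 1 ≤ k) (hkn : k ≤ n)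
    (D : Set (Pt n)) (hD : IsMesh D) (A C : Pt n → ℝ)
    (hAI : ∀ u ∈ D, A u ∈ Set.Icc (0:ℝ) 1) (hCI : ∀ u ∈ D, C u ∈ Set.Icc (0:ℝ) 1)
    (hAC : ∀ u ∈ D, A u ≤ C u)
    (hL : ∀ DU : Multiset (Box n), memRk k D DU → 0 ≤ Lk k A C DU)
    (hdelta : ∀ d ∈ D, deltaK k D A C d = 0)
    (hvert : ∀ w : Pt n, isCubeVertex w → A w = C w)
    (Q : Box n) (hQ : Q.IsKBox k) (hQD : ∀ w ∈ Q.vertices, w ∈ D)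
    (v : ℝ) (hv : Vvol k C Q = v) (hvneg : v < 0)
    (s : ℕ) (hs1 : 1 ≤ s) (hs2 : s ≤ 2 ^ (k - 1))
    (x : Fin s → Pt n) (hxinj : Function.Injective x)
    (hxv : ∀ i, x i ∈ Q.vertices ∧ Q.mult k (x i) = -1 ∧ A (x i) < C (x i))
    (hother : ∀ u ∈ Q.vertices, Q.mult k u = -1 → (∀ i, x i ≠ u) → A u = C u)
    (DU : Fin s → Multiset (Box n))
    (hDU : ∀ i, memRk k D (DU i) ∧ 0 < multDU k (DU i) (x i) ∧
      Lk k A C (DU i) < |(multDU k (DU i) (x i) : ℝ)| * |v| / (s : ℝ))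
    (M : ℕ) (hM : M = ∏ l, (multDU k (DU l) (x l)).natAbs)
    (mi : Fin s → ℕ)
    (hmi : ∀ i, mi i = ∏ l ∈ Finset.univ.erase i, (multDU k (DU l) (x l)).natAbs)
    (Rchk : Multiset (Box n))
    (hRchk : Rchk = Multiset.replicate M Q + ∑ l, mi l • DU l)
    (Rchki : Fin s → Multiset (Box n))
    (hRchki : ∀ i, Rchki i =
      Multiset.replicate M Q + ∑ l ∈ Finset.univ.erase i, mi l • DU l) :
    (∀ i, Lk k A C (Rchki i) ≤
        (M : ℝ) * (C (x i) - A (x i)) + (M : ℝ) * Vvol k C Q +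
        ∑ l ∈ Finset.univ.erase i, (mi l : ℝ) * Lk k A C (DU l)) ∧
    Lk k A C Rchk ≤ (M : ℝ) * Vvol k C Q + ∑ l, (mi l : ℝ) * Lk k A C (DU l) :=
  stmt13_general n k D A C hAC Q hQD v s x hxinj hxv hother DU hDU M hM mi hmi Rchk hRchk Rchki
    hRchki
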